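/- arXiv:2409.20172 — 2 statements merged into one kernel-verified Lean document; each statement's English description precedes it below -/
import Mathlib

section
/- Let H be a hypergraph, let (T, β) be a tree decomposition of H, and let S ⊆ V(H). Then there exists a set Y of nodes of T with |Y| ≤ ρ*_H(S) such that S ⊆ ⋃_{t ∈ Y} β(t). -/
open Finset
open scoped ENNReal

/-- A hypergraph: a finite vertex set, a finite set of nonempty hyperedges covering
all vertices. -/
structure FinHypergraph (α : Type*) where
  V : Finset α
  E : Finset (Finset α)
  edge_sub : ∀ e ∈ E, e ⊆ V
  edge_nonempty : ∀ e ∈ E, e.Nonempty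
  no_isolated : ∀ v ∈ V, ∃ e ∈ E, v ∈ e

/-- Degeneracy of a graph restricted to a finite vertex set `W`: the least `d` such that
every nonempty subset has a vertex with at most `d` neighbours inside the subset. -/
noncomputable def degeneracyOn {β : Type*} (G : SimpleGraph β) (W : Finset β) : ℕ :=
  sInf {d : ℕ | ∀ W' ⊆ W, W'.Nonempty → ∃ v ∈ W', ((W' : Set β) ∩ G.neighborSet v).ncard ≤ d}

namespace FinHypergraph

variable {α : Type*}

/-- The primal (Gaifman) graph of a hypergraph. -/
def primal (H : FinHypergraph α) : SimpleGraph α where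
  Adj u v := u ≠ v ∧ ∃ e ∈ H.E, u ∈ e ∧ v ∈ e
  symm := by
    constructor
    rintro u v ⟨hne, e, he, hu, hv⟩
    exact ⟨hne.symm, e, he, hv, hu⟩
  loopless := by
    constructor
    rintro u ⟨hne, -⟩
    exact hne rfl

/-- `S` is an `(A,B)`-separator in `H`: every path of the primal graph from a vertex
of `A` to a vertex of `B` meets `S`. -/
def IsSeparator (H : FinHypergraph α) (A B S : Finset α) : Prop :=
  ∀ a ∈ A, ∀ b ∈ B, ∀ p : H.primal.Walk a b, p.IsPath → ∃ v ∈ p.support, v ∈ S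

/-- `x` is a fractional `(A,B)`-separator in `H`. -/
def IsFracSeparator [DecidableEq α] (H : FinHypergraph α) (A B : Finset α) (x : α → ℝ) : Prop :=
  ∀ a ∈ A, ∀ b ∈ B, ∀ p : H.primal.Walk a b, p.IsPath →
    1 ≤ ∑ w ∈ p.support.toFinset, x w

/-- Fractional edge cover number of a weight function `x` on vertices. -/
noncomputable def fracCover [DecidableEq α] (H : FinHypergraph α) (x : α → ℝ) : ℝ :=
  sInf {c : ℝ | ∃ y : Finset α → ℝ, (∀ e, 0 ≤ y e ∧ y e ≤ 1) ∧
    (∀ v ∈ H.V, x v ≤ ∑ e ∈ H.E, if v ∈ e then y e else 0) ∧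
    c = ∑ e ∈ H.E, y e}

/-- Fractional edge cover number `ρ*_H(S)` of a vertex set. -/
noncomputable def fracCoverSet [DecidableEq α] (H : FinHypergraph α) (S : Finset α) : ℝ :=
  H.fracCover (fun v => if v ∈ S then 1 else 0)

/-- Fractional `E`-edge cover number of `x` (`∞` if no fractional `E`-edge cover exists). -/
noncomputable def fracCoverE [DecidableEq α] (H : FinHypergraph α) (E : Finset (Finset α))
    (x : α → ℝ) : ℝ≥0∞ :=
  sInf {c : ℝ≥0∞ | ∃ y : Finset α → ℝ, (∀ e, 0 ≤ y e ∧ y e ≤ 1) ∧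
    (∀ v ∈ H.V, x v ≤ ∑ e ∈ E, if v ∈ e then y e else 0) ∧
    c = ENNReal.ofReal (∑ e ∈ E, y e)}

/-- Fractional `E`-edge cover number `ρ*_{H,E}(S)` of a vertex set. -/
noncomputable def fracCoverESet [DecidableEq α] (H : FinHypergraph α) (E : Finset (Finset α))
    (S : Finset α) : ℝ≥0∞ :=
  H.fracCoverE E (fun v => if v ∈ S then 1 else 0)

/-- Integral edge cover number `ρ_H(S)`. -/
noncomputable def intCover [DecidableEq α] (H : FinHypergraph α) (S : Finset α) : ℕ :=
  sInf {n : ℕ | ∃ F ⊆ H.E, S ⊆ F.biUnion id ∧ F.card = n}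

/-- Independence number `α_H(R)`: maximum size of a subset of `R` such that no
hyperedge contains two of its vertices. -/
noncomputable def indepNum [DecidableEq α] (H : FinHypergraph α) (R : Finset α) : ℕ :=
  sSup {n : ℕ | ∃ I ⊆ R, (∀ e ∈ H.E, (I ∩ e).card ≤ 1) ∧ I.card = n}

/-- Maximum intersection size `η_H` of two distinct hyperedges. -/
noncomputable def eta [DecidableEq α] (H : FinHypergraph α) : ℕ :=
  sSup {n : ℕ | ∃ e₁ ∈ H.E, ∃ e₂ ∈ H.E, e₁ ≠ e₂ ∧ n = (e₁ ∩ e₂).card}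

/-- The (bipartite) incidence graph of a hypergraph. -/
def incidence (H : FinHypergraph α) : SimpleGraph (α ⊕ Finset α) where
  Adj p q :=
    (∃ v e, p = Sum.inl v ∧ q = Sum.inr e ∧ e ∈ H.E ∧ v ∈ e) ∨
    (∃ v e, p = Sum.inr e ∧ q = Sum.inl v ∧ e ∈ H.E ∧ v ∈ e)
  symm := by
    constructor
    rintro p q (⟨v, e, rfl, rfl, he, hv⟩ | ⟨v, e, rfl, rfl, he, hv⟩)
    · exact Or.inr ⟨v, e, rfl, rfl, he, hv⟩
    · exact Or.inl ⟨v, e, rfl, rfl, he, hv⟩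
  loopless := by
    constructor
    rintro p (⟨v, e, rfl, h, -, -⟩ | ⟨v, e, rfl, h, -, -⟩) <;> exact absurd h (by simp)

/-- `μ_H`: degeneracy of the incidence graph of `H`. -/
noncomputable def mu [DecidableEq α] (H : FinHypergraph α) : ℕ :=
  degeneracyOn H.incidence (H.V.image Sum.inl ∪ H.E.image Sum.inr)

/-- `γ(P) = ∑_{e ∈ E(H) : e ∩ P ≠ ∅} γ(e)`. -/
noncomputable def edgeWeight [DecidableEq α] (H : FinHypergraph α) (γ : Finset α → ℝ)
    (P : Finset α) : ℝ :=
  ∑ e ∈ H.E, if (e ∩ P).Nonempty then γ e else 0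

/-- `u` can reach `v` by a walk of the primal graph avoiding `S`. -/
def ReachOutside (H : FinHypergraph α) (S : Finset α) (u v : α) : Prop :=
  ∃ p : H.primal.Walk u v, ∀ w ∈ p.support, w ∉ S

/-- The connected component of `v` in the primal graph of `H` after deleting `S`. -/
noncomputable def comp (H : FinHypergraph α) (S : Finset α) (v : α) : Finset α := by
  classical exact H.V.filter (fun u => H.ReachOutside S v u)

/-- `S` is a `(γ,φ)`-balanced separator in `H`. -/
def IsGammaBalSep [DecidableEq α] (H : FinHypergraph α) (γ : Finset α → ℝ) (φ : ℝ)
    (S : Finset α) : Prop :=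
  ∀ v ∈ H.V, v ∉ S → H.edgeWeight γ (H.comp S v) ≤ φ * H.edgeWeight γ H.V

/-- `S` is a `(Z,φ)`-balanced separator in `H`. -/
def IsZBalSep [DecidableEq α] (H : FinHypergraph α) (Z : Finset α) (φ : ℝ)
    (S : Finset α) : Prop :=
  ∀ v ∈ H.V, v ∉ S →
    H.fracCoverSet (H.comp S v ∩ Z) ≤ φ * H.fracCoverSet Z

/-- `dist*_{H,x}(u,v)`: the minimum of `1` and the minimum total `x`-weight of a path
from `u` to `v` in the primal graph. -/
noncomputable def dist1 [DecidableEq α] (H : FinHypergraph α) (x : α → ℝ) (u v : α) : ℝ :=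
  sInf ({1} ∪ {c : ℝ | ∃ p : H.primal.Walk u v, p.IsPath ∧ c = ∑ w ∈ p.support.toFinset, x w})

/-- `dist*_{H,x}(e,e') = min_{u ∈ e, v ∈ e'} dist*_{H,x}(u,v)`. -/
noncomputable def distE [DecidableEq α] (H : FinHypergraph α) (x : α → ℝ)
    (e e' : Finset α) : ℝ :=
  sInf {c : ℝ | ∃ u ∈ e, ∃ v ∈ e', c = H.dist1 x u v}

/-- `x` is a fractional `(γ,φ)`-balanced separator in `H`. -/
def IsFracGammaBalSep [DecidableEq α] (H : FinHypergraph α) (γ : Finset α → ℝ) (φ : ℝ)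
    (x : α → ℝ) : Prop :=
  ∀ e ∈ H.E, (1 - φ) * (∑ e' ∈ H.E, γ e') ≤ ∑ e' ∈ H.E, H.distE x e e' * γ e'

/-- The induced subhypergraph `H[Q]` for `Q ⊆ V(H)`. -/
def induce [DecidableEq α] (H : FinHypergraph α) (Q : Finset α) (hQ : Q ⊆ H.V) :
    FinHypergraph α where
  V := Q
  E := (H.E.image (fun e => e ∩ Q)).filter (fun e => e.Nonempty)
  edge_sub := by
    intro e he
    simp only [mem_filter, mem_image] at he
    obtain ⟨⟨e', -, rfl⟩, -⟩ := he
    exact inter_subset_right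
  edge_nonempty := by
    intro e he
    exact (mem_filter.mp he).2
  no_isolated := by
    intro v hv
    obtain ⟨e, he, hve⟩ := H.no_isolated v (hQ hv)
    exact ⟨e ∩ Q, mem_filter.mpr ⟨mem_image.mpr ⟨e, he, rfl⟩,
      ⟨v, mem_inter.mpr ⟨hve, hv⟩⟩⟩, mem_inter.mpr ⟨hve, hv⟩⟩

/-- The ball `B^Q_c(r)` of radius `r` around `c` in `H[Q]` with respect to `x`. -/
noncomputable def ball [DecidableEq α] (H : FinHypergraph α) (x : α → ℝ) (Q : Finset α)
    (hQ : Q ⊆ H.V) (c : α) (r : ℝ) : Finset α := by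
  classical exact Q.filter (fun v => (H.induce Q hQ).dist1 x c v ≤ r)

end FinHypergraph

/-- A tree decomposition of a hypergraph. -/
structure TreeDecomp {α : Type*} (H : FinHypergraph α) where
  ι : Type
  fintype : Fintype ι
  T : SimpleGraph ι
  isTree : T.IsTree
  bag : ι → Finset α
  bag_sub : ∀ t, bag t ⊆ H.V
  bag_conn : ∀ v ∈ H.V, (SimpleGraph.induce {t | v ∈ bag t} T).Connected
  edge_bag : ∀ e ∈ H.E, ∃ t, e ⊆ bag t

/-!
Root the tree at `r` and let `top u` be the node of least depth whose bag contains `u`; as the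
nodes whose bags contain `u` form a subtree, `top u` lies on the path from `r` to each of them.
Take `v ∈ S` with `top v` deepest. If `u ∈ S` shares a hyperedge with `v`, their subtrees meet in
some node `t`; both tops lie on the path from `r` to `t`, `top u` above `top v`, and the subtree
of `u` contains the path from `top u` to `t`, so `u` is in the bag of `top v`. Hence, given a
fractional edge cover `y` of `S`, we may take the bag of `top v`, drop from `y` the hyperedges
through `v` (of total weight at least `1`) and from `S` the vertices of that bag, and recurse.
-/

namespace SimpleGraph

variable {V : Type*} {G : SimpleGraph V} {u v : V}

theorem IsAcyclic.eq_of_isPath (hG : G.IsAcyclic) {p q : G.Walk u v} (hp : p.IsPath)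
    (hq : q.IsPath) : p = q :=
  congrArg Subtype.val ((hG.subsingleton_path u v).elim ⟨p, hp⟩ ⟨q, hq⟩)

theorem IsAcyclic.length_eq_dist (hG : G.IsAcyclic) {p : G.Walk u v} (hp : p.IsPath) :
    p.length = G.dist u v := by
  obtain ⟨q, hq, hq_len⟩ := p.reachable.exists_path_of_dist
  rw [← hq_len, hG.eq_of_isPath hp hq]

theorem IsAcyclic.dist_lt_of_mem_support (hG : G.IsAcyclic) {p : G.Walk u v} (hp : p.IsPath)
    {x : V} (hx : x ∈ p.support) (hxv : x ≠ v) : G.dist u x < G.dist u v := by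
  classical
  rw [← hG.length_eq_dist hp, ← hG.length_eq_dist (hp.takeUntil hx)]
  exact Walk.length_takeUntil_lt_length hx hxv

theorem exists_isPath_support_subset_of_connected_induce {C : Set V}
    (hC : (G.induce C).Connected) (hu : u ∈ C) (hv : v ∈ C) :
    ∃ p : G.Walk u v, p.IsPath ∧ ∀ x ∈ p.support, x ∈ C := by
  classical
  obtain ⟨q⟩ := hC ⟨u, hu⟩ ⟨v, hv⟩
  let p := q.map (Embedding.induce C).toHom
  refine ⟨p.bypass, p.bypass_isPath, fun x hx => ?_⟩
  have hx' := Walk.support_map _ q ▸ p.support_bypass_subset_support hx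
  obtain ⟨⟨y, hy⟩, -, rfl⟩ := List.mem_map.mp hx'
  exact hy

theorem IsAcyclic.support_subset_of_connected_induce (hG : G.IsAcyclic) {C : Set V}
    (hC : (G.induce C).Connected) (hu : u ∈ C) (hv : v ∈ C) {p : G.Walk u v} (hp : p.IsPath) :
    ∀ x ∈ p.support, x ∈ C := by
  obtain ⟨q, hq, hqC⟩ := exists_isPath_support_subset_of_connected_induce hC hu hv
  rwa [hG.eq_of_isPath hp hq]

theorem IsAcyclic.mem_support_of_isMinOn_dist (hG : G.IsAcyclic) {r m s : V}
    {C : Set V} (hC : (G.induce C).Connected) (hm : m ∈ C) (hmin : IsMinOn (G.dist r) C m)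
    (hs : s ∈ C) {p : G.Walk r s} (hp : p.IsPath) : m ∈ p.support := by
  obtain ⟨q, hq, hqC⟩ := exists_isPath_support_subset_of_connected_induce hC hm hs
  obtain ⟨o, ho, -⟩ := (p.reachable.trans q.reachable.symm).exists_path_of_dist
  -- A vertex of `q` after `m` that is also on `o` would be in `C` and nearer to `r` than `m`.
  have hdisj : o.support.Disjoint q.support.tail := by
    intro x hxo hxq
    have hxm : x ≠ m := by
      rintro rfl
      exact (List.nodup_cons.mp (q.cons_tail_support ▸ hq.support_nodup)).1 hxq
    exact (hG.dist_lt_of_mem_support ho hxo hxm).not_ge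
      (isMinOn_iff.mp hmin x (hqC x (List.mem_of_mem_tail hxq)))
  have hoq : (o.append q).IsPath := by
    rw [Walk.isPath_def, Walk.support_append, List.nodup_append]
    exact ⟨ho.support_nodup, hq.support_nodup.sublist (List.tail_sublist _),
      fun x hx y hy hxy => hdisj hx (hxy ▸ hy)⟩
  rw [hG.eq_of_isPath hp hoq]
  exact Walk.mem_support_append_iff _ _ |>.mpr (Or.inl o.end_mem_support)

theorem IsTree.mem_of_isMinOn_dist (hG : G.IsTree) {r m m' t : V} {C C' : Set V}
    (hC : (G.induce C).Connected) (hC' : (G.induce C').Connected) (hm : m ∈ C) (hm' : m' ∈ C')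
    (hmin : IsMinOn (G.dist r) C m) (hmin' : IsMinOn (G.dist r) C' m')
    (hle : G.dist r m' ≤ G.dist r m) (ht : t ∈ C) (ht' : t ∈ C') : m ∈ C' := by
  classical
  obtain ⟨p, hp, -⟩ := (hG.connected r t).exists_path_of_dist
  have hm'p := hG.isAcyclic.mem_support_of_isMinOn_dist hC' hm' hmin' ht' hp
  have hmp := hG.isAcyclic.mem_support_of_isMinOn_dist hC hm hmin ht hp
  rw [← p.take_spec hm'p, Walk.mem_support_append_iff] at hmp
  rcases hmp with hmp | hmp
  · by_contra hmC'
    have hne : m ≠ m' := by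
      rintro rfl
      exact hmC' hm'
    exact (hG.isAcyclic.dist_lt_of_mem_support (hp.takeUntil hm'p) hmp hne).not_ge hle
  · exact hG.isAcyclic.support_subset_of_connected_induce hC' hm' ht' (hp.dropUntil hm'p) m hmp

end SimpleGraph

namespace FinHypergraph

variable {α : Type*} [DecidableEq α]

theorem le_fracCoverSet (H : FinHypergraph α) {S : Finset α} (hS : S ⊆ H.V) {c : ℝ}
    (h : ∀ y : Finset α → ℝ, (∀ e, 0 ≤ y e ∧ y e ≤ 1) →
      (∀ v ∈ S, 1 ≤ ∑ e ∈ H.E, if v ∈ e then y e else 0) → c ≤ ∑ e ∈ H.E, y e) :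
    c ≤ H.fracCoverSet S := by
  refine le_csInf ⟨_, fun _ => 1, fun _ => ⟨zero_le_one, le_rfl⟩, fun v hv => ?_, rfl⟩ ?_
  · obtain ⟨e, he, hve⟩ := H.no_isolated v hv
    calc (if v ∈ S then 1 else 0 : ℝ) ≤ if v ∈ e then 1 else 0 := by split_ifs <;> norm_num
      _ ≤ ∑ e ∈ H.E, if v ∈ e then 1 else 0 :=
        single_le_sum (f := fun e => if v ∈ e then (1 : ℝ) else 0) (fun e _ => by positivity) he
  · rintro _ ⟨y, hy, hcov, rfl⟩
    exact h y hy fun v hv => by simpa [hv] using hcov v (hS hv)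

end FinHypergraph

namespace TreeDecomp

variable {α : Type*} {H : FinHypergraph α} (D : TreeDecomp H)

theorem exists_mem_bag {v : α} (hv : v ∈ H.V) : ∃ t, v ∈ D.bag t := by
  obtain ⟨e, he, hve⟩ := H.no_isolated v hv
  obtain ⟨t, ht⟩ := D.edge_bag e he
  exact ⟨t, ht hve⟩

theorem exists_isMinOn_dist_bag (r : D.ι) {v : α} (hv : v ∈ H.V) :
    ∃ t, v ∈ D.bag t ∧ IsMinOn (D.T.dist r) {t | v ∈ D.bag t} t := by
  have := D.fintype
  obtain ⟨t, ht, hmin⟩ :=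
    Set.exists_min_image _ (D.T.dist r) (Set.toFinite _) (D.exists_mem_bag hv)
  exact ⟨t, ht, isMinOn_iff.mpr hmin⟩

theorem exists_mem_bag_forall_inter_subset_bag [DecidableEq α] {S : Finset α} (hS : S ⊆ H.V)
    (hne : S.Nonempty) : ∃ v ∈ S, ∃ t, v ∈ D.bag t ∧ ∀ e ∈ H.E, v ∈ e → e ∩ S ⊆ D.bag t := by
  obtain ⟨r⟩ : Nonempty D.ι := D.isTree.connected.nonempty
  have : Nonempty D.ι := ⟨r⟩
  have htops : ∀ u ∈ S, ∃ t, u ∈ D.bag t ∧ IsMinOn (D.T.dist r) {t | u ∈ D.bag t} t :=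
    fun u hu => D.exists_isMinOn_dist_bag r (hS hu)
  choose! top htop htop_min using htops
  obtain ⟨v, hv, hv_max⟩ := S.exists_max_image (fun u => D.T.dist r (top u)) hne
  refine ⟨v, hv, top v, htop v hv, fun e he hve u hu => ?_⟩
  obtain ⟨hue, huS⟩ := mem_inter.mp hu
  obtain ⟨t, ht⟩ := D.edge_bag e he
  exact D.isTree.mem_of_isMinOn_dist (D.bag_conn v (hS hv)) (D.bag_conn u (hS huS)) (htop v hv)
    (htop u huS) (htop_min v hv) (htop_min u huS) (hv_max u huS) (ht hve) (ht hue)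

theorem exists_cover_card_le_sum [DecidableEq α] (S : Finset α) (hS : S ⊆ H.V)
    (y : Finset α → ℝ) (hy : ∀ e ∈ H.E, 0 ≤ y e)
    (hcov : ∀ v ∈ S, 1 ≤ ∑ e ∈ H.E, if v ∈ e then y e else 0) :
    ∃ Y : Finset D.ι, (Y.card : ℝ) ≤ ∑ e ∈ H.E, y e ∧ S ⊆ Y.biUnion D.bag := by
  classical
  induction S using Finset.strongInduction generalizing y with
  | H S ih =>
  obtain rfl | hne := S.eq_empty_or_nonempty
  · exact ⟨∅, by simpa using sum_nonneg hy, empty_subset _⟩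
  obtain ⟨v, hv, t, hvt, hnbr⟩ := D.exists_mem_bag_forall_inter_subset_bag hS hne
  set y' : Finset α → ℝ := fun e => if v ∈ e then 0 else y e with hy'
  have hsplit : ∑ e ∈ H.E, y e = (∑ e ∈ H.E, if v ∈ e then y e else 0) + ∑ e ∈ H.E, y' e := by
    rw [← sum_add_distrib]
    exact sum_congr rfl fun e _ => by split_ifs <;> simp [*]
  -- No hyperedge through `v` meets `S \ D.bag t`, so `y'` still covers it.
  have hcov' : ∀ u ∈ S \ D.bag t, 1 ≤ ∑ e ∈ H.E, if u ∈ e then y' e else 0 := by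
    intro u hu
    obtain ⟨huS, hut⟩ := mem_sdiff.mp hu
    refine (hcov u huS).trans_eq (sum_congr rfl fun e he => ?_)
    by_cases hve : v ∈ e
    · have hue : u ∉ e := fun hue => hut (hnbr e he hve (mem_inter.mpr ⟨hue, huS⟩))
      simp [hue]
    · simp [hy', hve]
  obtain ⟨Y, hYcard, hYcov⟩ := ih (S \ D.bag t) ((ssubset_iff_of_subset sdiff_subset).mpr
      ⟨v, hv, fun h => (mem_sdiff.mp h).2 hvt⟩)
    (sdiff_subset.trans hS) y' (fun e he => by by_cases hve : v ∈ e <;> simp [hy', hve, hy e he])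
    hcov'
  refine ⟨insert t Y, ?_, fun u hu => ?_⟩
  · calc ((insert t Y).card : ℝ) ≤ Y.card + 1 := by exact_mod_cast card_insert_le t Y
      _ ≤ ∑ e ∈ H.E, y e := by linarith [hcov v hv]
  · by_cases hut : u ∈ D.bag t
    · exact mem_biUnion.mpr ⟨t, mem_insert_self t Y, hut⟩
    · exact biUnion_subset_biUnion_of_subset_left _ (subset_insert t Y)
        (hYcov (mem_sdiff.mpr ⟨hu, hut⟩))

end TreeDecomp

/-- Any vertex set `S` can be covered by at most `ρ*_H(S)` bags of any
tree decomposition of `H`. -/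
theorem cover_by_bags {α : Type*} [DecidableEq α] (H : FinHypergraph α)
    (D : TreeDecomp H) (S : Finset α) (hS : S ⊆ H.V) :
    ∃ Y : Finset D.ι, (Y.card : ℝ) ≤ H.fracCoverSet S ∧ S ⊆ Y.biUnion D.bag := by
  have := D.fintype
  have huniv : S ⊆ univ.biUnion D.bag := fun v hv =>
    mem_biUnion.mpr ((D.exists_mem_bag (hS hv)).imp fun t ht => ⟨mem_univ t, ht⟩)
  obtain ⟨Y, hYcov, hYmin⟩ := exists_min_image (univ.filter (S ⊆ ·.biUnion D.bag)) card
    ⟨univ, mem_filter.mpr ⟨mem_univ _, huniv⟩⟩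
  refine ⟨Y, H.le_fracCoverSet hS fun y hy hcov => ?_, (mem_filter.mp hYcov).2⟩
  obtain ⟨Y', hY'card, hY'cov⟩ := D.exists_cover_card_le_sum S hS y (fun e _ => (hy e).1) hcov
  exact (Nat.cast_le.mpr (hYmin Y' (mem_filter.mpr ⟨mem_univ _, hY'cov⟩))).trans hY'card
end

section
/- Let H be a hypergraph with at least two hyperedges and η_H ≥ 1 that admits a tree decomposition of fractional hypertree width at most ω. Then μ_H ≤ 2·η_H·ω. -/
open Finset
open scoped ENNReal

/-!
Root the tree decomposition and, in a nonempty set `W` of vertices and edges of `H`, take the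
vertex `v` whose topmost bag `B` is deepest; then the `W`-part of every edge through `v` lies in
`B`. Cover `B` fractionally by `y` of total weight `ω`. Double counting over the edges gives
`|e ∩ W| ≤ |e ∩ W| · y(e) + η ω` for every edge `e ∋ v`, so either some such edge with `y(e) ≤ 1/2`
has at most `2 η ω` neighbours in `W`, or all edges at `v` have weight above `1/2`, and there are
at most `2 ω ≤ 2 η ω` of them. Hence every nonempty `W` has an element of degree at most `2 η ω`.
-/

namespace SimpleGraph

variable {ι : Type*} {G : SimpleGraph ι}

lemma Walk.IsPath.append {a b c : ι} {p : G.Walk a b} {q : G.Walk b c} (hp : p.IsPath)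
    (hq : q.IsPath) (h : ∀ x ∈ p.support, x ∈ q.support → x = b) : (p.append q).IsPath := by
  have hq' := hq.support_nodup
  rw [← q.cons_tail_support, List.nodup_cons] at hq'
  rw [Walk.isPath_def, Walk.support_append, List.nodup_append]
  refine ⟨hp.support_nodup, hq'.2, fun x hx y hy hxy => ?_⟩
  subst hxy
  obtain rfl := h x hx (q.cons_tail_support ▸ List.mem_cons_of_mem _ hy)
  exact hq'.1 hy

namespace IsTree

variable (hG : G.IsTree)

noncomputable def path (a b : ι) : G.Walk a b :=
  (hG.existsUnique_path a b).choose

lemma isPath_path (a b : ι) : (hG.path a b).IsPath :=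
  (hG.existsUnique_path a b).choose_spec.1

lemma eq_path {a b : ι} {p : G.Walk a b} (hp : p.IsPath) : p = hG.path a b :=
  (hG.existsUnique_path a b).choose_spec.2 p hp

lemma support_path_subset {C : Set ι} (hC : (G.induce C).Connected) {a b : ι} (ha : a ∈ C)
    (hb : b ∈ C) : ∀ x ∈ (hG.path a b).support, x ∈ C := by
  classical
  obtain ⟨w⟩ := hC ⟨a, ha⟩ ⟨b, hb⟩
  have hw : ∀ x ∈ (w.map (Embedding.induce C).toHom).support, x ∈ C := by
    intro x hx
    rw [Walk.support_map] at hx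
    obtain ⟨y, -, rfl⟩ := List.mem_map.mp hx
    exact y.2
  obtain ⟨w', hw'⟩ : ∃ w' : G.Walk a b, ∀ x ∈ w'.support, x ∈ C := ⟨_, hw⟩
  intro x hx
  rw [← hG.eq_path w'.bypass_isPath] at hx
  exact hw' x (w'.support_bypass_subset_support hx)

variable [DecidableEq ι]

lemma length_path_lt {r x y : ι} (hx : x ∈ (hG.path r y).support) (hxy : x ≠ y) :
    (hG.path r x).length < (hG.path r y).length := by
  have htake : (hG.path r y).takeUntil x hx = hG.path r x :=
    hG.eq_path ((hG.isPath_path r y).takeUntil hx)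
  have hdrop : ((hG.path r y).dropUntil x hx).length ≠ 0 := fun h0 =>
    hxy (Walk.eq_of_length_eq_zero h0)
  have hlen := congrArg Walk.length ((hG.path r y).take_spec hx)
  rw [Walk.length_append, htake] at hlen
  omega

/-- The witness is the vertex of `C` closest to `r`. -/
lemma exists_mem_support_path [Finite ι] (r : ι) {C : Set ι} (hC : (G.induce C).Connected) :
    ∃ m ∈ C, ∀ t ∈ C, m ∈ (hG.path r t).support := by
  obtain ⟨⟨c, hc⟩⟩ := hC.nonempty
  obtain ⟨m, hmC, hmin⟩ := Set.exists_min_image C (fun t => (hG.path r t).length)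
    (Set.toFinite C) ⟨c, hc⟩
  refine ⟨m, hmC, fun t ht => ?_⟩
  have happend : ((hG.path r m).append (hG.path m t)).IsPath := by
    refine (hG.isPath_path r m).append (hG.isPath_path m t) fun x hx hx' => ?_
    by_contra hxm
    exact (hmin x (hG.support_path_subset hC hmC ht x hx')).not_gt (hG.length_path_lt hx hxm)
  rw [← hG.eq_path happend, Walk.mem_support_append_iff]
  exact Or.inr (Walk.start_mem_support _)

lemma mem_of_mem_support_path {C : Set ι} (hC : (G.induce C).Connected) {r a b t : ι}
    (ha : a ∈ C) (ht : t ∈ C) (haP : a ∈ (hG.path r t).support)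
    (hbP : b ∈ (hG.path r t).support)
    (hab : (hG.path r a).length ≤ (hG.path r b).length) : b ∈ C := by
  rw [← (hG.path r t).take_spec haP, Walk.mem_support_append_iff,
    hG.eq_path ((hG.isPath_path r t).takeUntil haP),
    hG.eq_path ((hG.isPath_path r t).dropUntil haP)] at hbP
  rcases hbP with hb | hb
  · by_contra hbC
    have hba : b ≠ a := fun h => hbC (h ▸ ha)
    exact (hG.length_path_lt hb hba).not_ge hab
  · exact hG.support_path_subset hC ha ht b hb

end IsTree

end SimpleGraph

lemma degeneracyOn_le_of_forall_le {β : Type*} {G : SimpleGraph β} {W : Finset β} {c : ℝ}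
    (hc : 0 ≤ c) (h : ∀ W' ⊆ W, W'.Nonempty → ∀ δ : ℕ,
      (∀ v ∈ W', δ ≤ ((W' : Set β) ∩ G.neighborSet v).ncard) → (δ : ℝ) ≤ c) :
    (degeneracyOn G W : ℝ) ≤ c := by
  have hfloor : degeneracyOn G W ≤ ⌊c⌋₊ := Nat.sInf_le fun W' hW' hne => by
    obtain ⟨v, hv, hmin⟩ :=
      W'.exists_min_image (fun v => ((W' : Set β) ∩ G.neighborSet v).ncard) hne
    exact ⟨v, hv, Nat.le_floor (h W' hW' hne _ hmin)⟩
  exact (Nat.cast_le.mpr hfloor).trans (Nat.floor_le hc)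

namespace FinHypergraph

variable {α : Type*} [DecidableEq α] (H : FinHypergraph α)

lemma ncard_inter_incidence_neighborSet_inl (W : Finset (α ⊕ Finset α)) (hW : W.toRight ⊆ H.E)
    (v : α) : ((W : Set (α ⊕ Finset α)) ∩ H.incidence.neighborSet (.inl v)).ncard =
      #{e ∈ W.toRight | v ∈ e} := by
  have hset : (W : Set (α ⊕ Finset α)) ∩ H.incidence.neighborSet (.inl v) =
      ({e ∈ W.toRight | v ∈ e}.map .inr : Finset (α ⊕ Finset α)) := by
    ext (u | e)
    · simp [incidence]
    · simpa [incidence] using fun h _ => hW (mem_toRight.mpr h)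
  rw [hset, Set.ncard_coe_finset, card_map]

lemma ncard_inter_incidence_neighborSet_inr (W : Finset (α ⊕ Finset α)) {e : Finset α}
    (he : e ∈ H.E) : ((W : Set (α ⊕ Finset α)) ∩ H.incidence.neighborSet (.inr e)).ncard =
      #(e ∩ W.toLeft) := by
  have hset : (W : Set (α ⊕ Finset α)) ∩ H.incidence.neighborSet (.inr e) =
      ((e ∩ W.toLeft).map .inl : Finset (α ⊕ Finset α)) := by
    ext (u | f) <;> simp [incidence, he, and_comm]
  rw [hset, Set.ncard_coe_finset, card_map]

lemma card_inter_le_eta {e₁ e₂ : Finset α} (h₁ : e₁ ∈ H.E) (h₂ : e₂ ∈ H.E) (hne : e₁ ≠ e₂) :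
    #(e₁ ∩ e₂) ≤ H.eta := by
  refine le_csSup ⟨#H.V, ?_⟩ ⟨e₁, h₁, e₂, h₂, hne, rfl⟩
  rintro _ ⟨f₁, hf₁, f₂, -, -, rfl⟩
  exact card_le_card (inter_subset_left.trans (H.edge_sub f₁ hf₁))

/-- The fractional edge covers of `S` over which `fracCoverSet S` is the infimum. -/
def IsFracCover (S : Finset α) (y : Finset α → ℝ) : Prop :=
  (∀ e, 0 ≤ y e ∧ y e ≤ 1) ∧
    ∀ v ∈ H.V, (if v ∈ S then (1 : ℝ) else 0) ≤ ∑ e ∈ H.E, if v ∈ e then y e else 0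

lemma isFracCover_one (S : Finset α) : H.IsFracCover S 1 := by
  refine ⟨fun _ => ⟨zero_le_one, le_rfl⟩, fun v hv => ?_⟩
  obtain ⟨e, he, hve⟩ := H.no_isolated v hv
  calc (if v ∈ S then (1 : ℝ) else 0) ≤ 1 := by split_ifs <;> norm_num
    _ = if v ∈ e then (1 : Finset α → ℝ) e else 0 := by simp [hve]
    _ ≤ ∑ f ∈ H.E, if v ∈ f then (1 : Finset α → ℝ) f else 0 :=
      single_le_sum (f := fun f => if v ∈ f then (1 : Finset α → ℝ) f else 0)
        (fun f _ => by split_ifs <;> norm_num) he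

lemma le_fracCoverSet_s17 {S : Finset α} {a : ℝ}
    (h : ∀ y, H.IsFracCover S y → a ≤ ∑ e ∈ H.E, y e) : a ≤ H.fracCoverSet S :=
  le_csInf ⟨_, 1, (H.isFracCover_one S).1, (H.isFracCover_one S).2, rfl⟩
    fun _ ⟨y, hy01, hcov, hc⟩ => hc ▸ h y ⟨hy01, hcov⟩

lemma fracCoverSet_nonneg (S : Finset α) : 0 ≤ H.fracCoverSet S :=
  H.le_fracCoverSet_s17 fun _ hy => sum_nonneg fun e _ => (hy.1 e).1

variable {H}

/-- Double counting the cover of `A ⊆ e` over the edges: `e` itself contributes `#A * y e`, and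
every other edge meets `A` in at most `η` vertices. -/
lemma IsFracCover.card_mul_one_sub_le {B A e : Finset α} {y : Finset α → ℝ}
    (hy : H.IsFracCover B y) (he : e ∈ H.E) (hAe : A ⊆ e) (hAB : A ⊆ B) :
    (#A : ℝ) * (1 - y e) ≤ H.eta * ∑ f ∈ H.E, y f := by
  have hcount : (#A : ℝ) ≤ ∑ f ∈ H.E, (#(A ∩ f) : ℝ) * y f :=
    calc (#A : ℝ) = ∑ u ∈ A, (1 : ℝ) := by simp
      _ ≤ ∑ u ∈ A, ∑ f ∈ H.E, if u ∈ f then y f else 0 := sum_le_sum fun u hu => by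
          simpa [hAB hu] using hy.2 u (H.edge_sub e he (hAe hu))
      _ = ∑ f ∈ H.E, (#(A ∩ f) : ℝ) * y f := by
          rw [sum_comm]
          refine sum_congr rfl fun f _ => ?_
          rw [← sum_filter, sum_const, filter_mem_eq_inter, nsmul_eq_mul]
  have hothers : ∑ f ∈ H.E.erase e, (#(A ∩ f) : ℝ) * y f ≤ H.eta * ∑ f ∈ H.E, y f :=
    calc ∑ f ∈ H.E.erase e, (#(A ∩ f) : ℝ) * y f ≤ ∑ f ∈ H.E.erase e, (H.eta : ℝ) * y f := by
          refine sum_le_sum fun f hf => mul_le_mul_of_nonneg_right ?_ (hy.1 f).1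
          have hAf : A ∩ f ⊆ e ∩ f := inter_subset_inter_right hAe
          exact_mod_cast (card_le_card hAf).trans
            (H.card_inter_le_eta he (mem_of_mem_erase hf) (ne_of_mem_erase hf).symm)
      _ ≤ H.eta * ∑ f ∈ H.E, y f := by
          rw [← mul_sum]
          exact mul_le_mul_of_nonneg_left
            (sum_le_sum_of_subset_of_nonneg (erase_subset e H.E) fun f _ _ => (hy.1 f).1)
            (Nat.cast_nonneg _)
  rw [← add_sum_erase _ _ he, inter_eq_left.mpr hAe] at hcount
  linarith

lemma IsFracCover.cast_le_two_mul_eta_mul_sum (hη : 1 ≤ H.eta) {S B : Finset α}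
    {F : Finset (Finset α)} {v : α} {y : Finset α → ℝ} (hy : H.IsFracCover B y) (hF : F ⊆ H.E)
    (hB : ∀ e ∈ F, v ∈ e → e ∩ S ⊆ B) {δ : ℕ} (hδv : δ ≤ #{e ∈ F | v ∈ e})
    (hδF : ∀ e ∈ F, v ∈ e → δ ≤ #(e ∩ S)) :
    (δ : ℝ) ≤ 2 * H.eta * ∑ f ∈ H.E, y f := by
  have hη' : (1 : ℝ) ≤ H.eta := by exact_mod_cast hη
  have hsum : 0 ≤ ∑ f ∈ H.E, y f := sum_nonneg fun f _ => (hy.1 f).1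
  by_cases hlight : ∃ e ∈ F, v ∈ e ∧ y e ≤ 1 / 2
  · obtain ⟨e, heF, hve, hye⟩ := hlight
    have hcount := hy.card_mul_one_sub_le (hF heF) inter_subset_left (hB e heF hve)
    have hδe : (δ : ℝ) ≤ #(e ∩ S) := by exact_mod_cast hδF e heF hve
    nlinarith
  · push Not at hlight
    calc (δ : ℝ) ≤ #{e ∈ F | v ∈ e} := by exact_mod_cast hδv
      _ = ∑ e ∈ F with v ∈ e, (1 : ℝ) := by simp
      _ ≤ ∑ e ∈ F with v ∈ e, 2 * y e := sum_le_sum fun e he => by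
          have := hlight e (mem_filter.mp he).1 (mem_filter.mp he).2
          linarith
      _ ≤ 2 * ∑ f ∈ H.E, y f := by
          have hsub : {e ∈ F | v ∈ e} ⊆ H.E := fun f hf => hF (mem_filter.mp hf).1
          rw [← mul_sum]
          gcongr
          exact fun f _ _ => (hy.1 f).1
      _ ≤ 2 * H.eta * ∑ f ∈ H.E, y f := by nlinarith

end FinHypergraph

namespace TreeDecomp

variable {α : Type*} [DecidableEq α] {H : FinHypergraph α} (D : TreeDecomp H)

lemma width_nonneg {ω : ℝ} (hω : ∀ t, H.fracCoverSet (D.bag t) ≤ ω) : 0 ≤ ω := by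
  obtain ⟨t⟩ := D.isTree.connected.nonempty
  exact (H.fracCoverSet_nonneg _).trans (hω t)

/-- Root the tree and take `v ∈ S` whose topmost bag `m v` is deepest. An edge `e ∋ v` lies in a
bag `t` below `m v`; for `u ∈ e ∩ S` the topmost bag `m u` is on the root path to `t` and no deeper
than `m v`, so the connected set of bags containing `u` runs from `m u` through `m v` to `t`. -/
lemma exists_forall_inter_subset_bag {S : Finset α} (hS : S ⊆ H.V) (hne : S.Nonempty) :
    ∃ v ∈ S, ∃ t, ∀ e ∈ H.E, v ∈ e → e ∩ S ⊆ D.bag t := by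
  classical
  have := D.fintype
  have hT := D.isTree
  obtain ⟨r⟩ := hT.connected.nonempty
  have : Nonempty D.ι := ⟨r⟩
  choose! m hm hm_path using fun u (hu : u ∈ H.V) =>
    hT.exists_mem_support_path r (D.bag_conn u hu)
  obtain ⟨v, hvS, hv_max⟩ := S.exists_max_image (fun u => (hT.path r (m u)).length) hne
  refine ⟨v, hvS, m v, fun e he hve u hu => ?_⟩
  obtain ⟨hue, huS⟩ := mem_inter.mp hu
  obtain ⟨t, het⟩ := D.edge_bag e he
  exact hT.mem_of_mem_support_path (D.bag_conn u (hS huS)) (hm u (hS huS)) (het hue)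
    (hm_path u (hS huS) t (het hue)) (hm_path v (hS hvS) t (het hve)) (hv_max u huS)

lemma cast_le_two_mul_eta_mul_width (hη : 1 ≤ H.eta) {ω : ℝ}
    (hω : ∀ t, H.fracCoverSet (D.bag t) ≤ ω) {S : Finset α} {F : Finset (Finset α)}
    (hS : S ⊆ H.V) (hF : F ⊆ H.E) (hne : S.Nonempty ∨ F.Nonempty) {δ : ℕ}
    (hδS : ∀ v ∈ S, δ ≤ #{e ∈ F | v ∈ e}) (hδF : ∀ e ∈ F, δ ≤ #(e ∩ S)) :
    (δ : ℝ) ≤ 2 * H.eta * ω := by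
  have hω0 := D.width_nonneg hω
  rcases S.eq_empty_or_nonempty with rfl | hSne
  · obtain ⟨e, he⟩ := hne.resolve_left not_nonempty_empty
    have hδ : δ = 0 := by simpa using hδF e he
    rw [hδ, Nat.cast_zero]
    positivity
  · obtain ⟨v, hvS, t, hB⟩ := D.exists_forall_inter_subset_bag hS hSne
    have hη0 : (0 : ℝ) < 2 * H.eta := by
      have : (1 : ℝ) ≤ H.eta := by exact_mod_cast hη
      linarith
    have hbag : (δ : ℝ) / (2 * H.eta) ≤ H.fracCoverSet (D.bag t) :=
      H.le_fracCoverSet_s17 fun y hy => by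
        rw [div_le_iff₀' hη0]
        exact hy.cast_le_two_mul_eta_mul_sum hη hF (fun e he hve => hB e (hF he) hve)
          (hδS v hvS) fun e he _ => hδF e he
    exact (div_le_iff₀' hη0).mp (hbag.trans (hω t))

end TreeDecomp

theorem mu_le_eta_mul_width_general {α : Type*} [DecidableEq α] (H : FinHypergraph α)
    (hη : 1 ≤ H.eta)
    (D : TreeDecomp H) (ω : ℝ) (hω : ∀ t, H.fracCoverSet (D.bag t) ≤ ω) :
    (H.mu : ℝ) ≤ 2 * (H.eta : ℝ) * ω := by
  have hω0 := D.width_nonneg hω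
  refine degeneracyOn_le_of_forall_le (by positivity) fun W hW hne δ hδ => ?_
  have hWV : W.toLeft ⊆ H.V := fun v hv => by simpa using hW (mem_toLeft.mp hv)
  have hWE : W.toRight ⊆ H.E := fun e he => by simpa using hW (mem_toRight.mp he)
  have hne' : W.toLeft.Nonempty ∨ W.toRight.Nonempty := by
    obtain ⟨v | e, hx⟩ := hne
    exacts [.inl ⟨v, mem_toLeft.mpr hx⟩, .inr ⟨e, mem_toRight.mpr hx⟩]
  refine D.cast_le_two_mul_eta_mul_width hη hω hWV hWE hne' (fun v hv => ?_) fun e he => ?_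
  · rw [← H.ncard_inter_incidence_neighborSet_inl W hWE]
    exact hδ _ (mem_toLeft.mp hv)
  · rw [← H.ncard_inter_incidence_neighborSet_inr W (hWE he)]
    exact hδ _ (mem_toRight.mp he)

/-- For every hypergraph `H` of fractional hypertree width at most `ω`,
the degeneracy of its incidence graph satisfies `μ_H ≤ 2·η_H·ω`. -/
theorem mu_le_eta_mul_width {α : Type*} [DecidableEq α] (H : FinHypergraph α)
    (hcard : 2 ≤ H.E.card) (hη : 1 ≤ H.eta)
    (D : TreeDecomp H) (ω : ℝ) (hω : ∀ t, H.fracCoverSet (D.bag t) ≤ ω) :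
    (H.mu : ℝ) ≤ 2 * (H.eta : ℝ) * ω :=
  mu_le_eta_mul_width_general H hη D ω hω
end
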